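/- arXiv:1209.4395 — 5 statements merged into one kernel-verified Lean document; each statement's English description precedes it below -/
import Mathlib

section
/- Let d, r, k be real numbers with d > 0, rk > 0, and 4rk > d². Then there is no sequence γ : ℕ → ℝ satisfying γ_1 = d, γ_{n+1} = d − rk/γ_n for all n ≥ 1, and γ_n > 0 for all n ≥ 1. Consequently there exists N such that any sequence satisfying γ_1 = d and the recursion (with all earlier terms nonzero) has γ_N ≤ 0. -/
/-!
While it stays positive, the orbit of `d` under `x ↦ d - c / x` decreases by at least
`(c - d²/4)/d` per step, since `x - (d - c/x) = ((x - d/2)² + c - d²/4)/x` and `x ≤ d`.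
When `4c > d²` this step is positive, so the orbit reaches `(-∞, 0]` after finitely many steps.
-/

/-- With `c = r k`, `(contFracStep d c)^[n] d` is the paper's `γ_{n+1}`. -/
noncomputable def contFracStep (d c x : ℝ) : ℝ := d - c / x

lemma contFracStep_le_sub {d c x : ℝ} (h : d ^ 2 ≤ 4 * c) (hx : 0 < x)
    (hxd : x ≤ d) : contFracStep d c x ≤ x - (c - d ^ 2 / 4) / d := by
  have hδ : 0 ≤ c - d ^ 2 / 4 := by linarith
  have hsq : c - d ^ 2 / 4 ≤ x ^ 2 - d * x + c := by nlinarith [sq_nonneg (x - d / 2)]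
  have key : (c - d ^ 2 / 4) / d ≤ x - d + c / x :=
    calc (c - d ^ 2 / 4) / d ≤ (c - d ^ 2 / 4) / x := div_le_div_of_nonneg_left hδ hx hxd
      _ ≤ (x ^ 2 - d * x + c) / x := div_le_div_of_nonneg_right hsq hx.le
      _ = x - d + c / x := by field_simp
  unfold contFracStep
  linarith

lemma iterate_contFracStep_le {d c : ℝ} (hd : 0 < d) (h : d ^ 2 ≤ 4 * c) {n : ℕ}
    (hpos : ∀ m < n, 0 < (contFracStep d c)^[m] d) :
    (contFracStep d c)^[n] d ≤ d - n * ((c - d ^ 2 / 4) / d) := by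
  induction n with
  | zero => simp
  | succ n ih =>
    have ih := ih fun m hm => hpos m (Nat.lt_succ_of_lt hm)
    have hε : 0 ≤ (c - d ^ 2 / 4) / d := div_nonneg (by linarith) hd.le
    have hle : (contFracStep d c)^[n] d ≤ d := by nlinarith [Nat.cast_nonneg (α := ℝ) n]
    rw [Function.iterate_succ_apply']
    have := contFracStep_le_sub h (hpos n n.lt_succ_self) hle
    push_cast
    linarith

lemma exists_iterate_contFracStep_nonpos {d c : ℝ} (h : d ^ 2 < 4 * c) :
    ∃ n, (contFracStep d c)^[n] d ≤ 0 := by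
  rcases le_or_gt d 0 with hd | hd
  · exact ⟨0, hd⟩
  by_contra! hpos
  have hε : 0 < (c - d ^ 2 / 4) / d := div_pos (by linarith) hd
  obtain ⟨n, hn⟩ := exists_nat_gt (d / ((c - d ^ 2 / 4) / d))
  have hbound := iterate_contFracStep_le hd h.le (n := n) fun m _ => hpos m
  have : d < n * ((c - d ^ 2 / 4) / d) := (div_lt_iff₀ hε).mp hn
  linarith [hpos n]

lemma eq_iterate_of_forall_lt {α : Type*} {g : α → α} {a : α} {γ : ℕ → α} {N : ℕ}
    (h1 : γ 1 = a) (hrec : ∀ n, 1 ≤ n → n < N → γ (n + 1) = g (γ n)) :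
    ∀ m < N, γ (m + 1) = g^[m] a := by
  intro m hm
  induction m with
  | zero => exact h1
  | succ m ih =>
    rw [hrec (m + 1) (by omega) hm, ih (by omega), Function.iterate_succ_apply']

theorem stmt_3_general (d r k : ℝ)
    (h : 4 * (r * k) > d ^ 2) :
    (¬ ∃ γ : ℕ → ℝ, γ 1 = d ∧ (∀ n, 1 ≤ n → γ (n + 1) = d - r * k / γ n) ∧
        (∀ n, 1 ≤ n → γ n > 0)) ∧
    ∃ N : ℕ, 1 ≤ N ∧ ∀ γ : ℕ → ℝ, γ 1 = d →
      (∀ n, 1 ≤ n → n < N → γ n ≠ 0) →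
      (∀ n, 1 ≤ n → n < N → γ (n + 1) = d - r * k / γ n) →
      γ N ≤ 0 := by
  obtain ⟨N, hN⟩ := exists_iterate_contFracStep_nonpos h
  have hlast : ∀ γ : ℕ → ℝ, γ 1 = d →
      (∀ n, 1 ≤ n → n < N + 1 → γ (n + 1) = d - r * k / γ n) → γ (N + 1) ≤ 0 :=
    fun γ h1 hrec => (eq_iterate_of_forall_lt (g := contFracStep d (r * k)) h1 hrec N
      N.lt_succ_self).trans_le hN
  refine ⟨fun ⟨γ, h1, hrec, hpos⟩ => ?_, N + 1, N.succ_pos, fun γ h1 _ hrec => hlast γ h1 hrec⟩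
  exact (hpos (N + 1) N.succ_pos).not_ge (hlast γ h1 fun n hn _ => hrec n hn)

/-- When `4·r·k > d²` there is no everywhere-positive solution of the
auxiliary recursion `γ 1 = d`, `γ (n+1) = d - r*k/γ n`; consequently there is
an `N` such that any sequence satisfying the recursion (with all earlier
terms nonzero) has `γ N ≤ 0`. -/
theorem stmt_3 (d r k : ℝ) (hd : d > 0) (hrk : r * k > 0)
    (h : 4 * (r * k) > d ^ 2) :
    (¬ ∃ γ : ℕ → ℝ, γ 1 = d ∧ (∀ n, 1 ≤ n → γ (n + 1) = d - r * k / γ n) ∧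
        (∀ n, 1 ≤ n → γ n > 0)) ∧
    ∃ N : ℕ, 1 ≤ N ∧ ∀ γ : ℕ → ℝ, γ 1 = d →
      (∀ n, 1 ≤ n → n < N → γ n ≠ 0) →
      (∀ n, 1 ≤ n → n < N → γ (n + 1) = d - r * k / γ n) →
      γ N ≤ 0 :=
  stmt_3_general d r k h
end

section
/- Let k ≥ 2 and d ≥ 2 be integers and let r ≥ 1 be an integer with 4rk ≤ d². Let x₊ := (d + √(d² − 4rk))/2 and define D : ℕ → ℝ by D_0 = 1, D_1 = d, and D_{n+1} = d·D_n^k − r·k·D_{n−1}^k·D_n^{k−1} for n ≥ 1. Then for all n ≥ 1, D_n ≥ x₊^{s_{n−1}} · d^{k^{n−1}}, where s_{n−1} := Σ_{l=0}^{n−2} k^l = (k^{n−1} − 1)/(k − 1) (with s_0 = 0). -/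
/-!
Since `x₊² = d·x₊ - r·k`, the recursion propagates the one-step bound `D (n+1) ≥ x₊ · D n ^ k`:
substituting `D (n-1) ^ k ≤ D n / x₊` into the subtracted term gives
`D (n+1) ≥ (d - r·k/x₊) · D n ^ k = x₊ · D n ^ k`. Iterating it from `D 1 = d` produces the
exponents `s_{n-1} = 1 + k·s_{n-2}` and `k ^ (n-1)`.
-/

open Finset

section QuadraticRoot

variable {d c : ℝ}

lemma add_sqrt_sq_sub_div_two_sq (h : 0 ≤ d ^ 2 - 4 * c) :
    ((d + √(d ^ 2 - 4 * c)) / 2) ^ 2 = d * ((d + √(d ^ 2 - 4 * c)) / 2) - c := by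
  have hsq := Real.sq_sqrt h
  linear_combination hsq / 4

lemma add_sqrt_sq_sub_div_two_le (hd : 0 ≤ d) (hc : 0 ≤ c) :
    (d + √(d ^ 2 - 4 * c)) / 2 ≤ d := by
  have : √(d ^ 2 - 4 * c) ≤ d :=
    calc √(d ^ 2 - 4 * c) ≤ √(d ^ 2) := Real.sqrt_le_sqrt (by linarith)
      _ = d := Real.sqrt_sq hd
  linarith

end QuadraticRoot

section Recurrence

variable {d c x : ℝ} {k : ℕ}

lemma mul_pow_le_recurrence_step {a b : ℝ} (hk : 1 ≤ k) (hc : 0 ≤ c) (hx : 0 < x)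
    (hroot : x ^ 2 = d * x - c) (hb : 0 < b) (hab : x * a ^ k ≤ b) :
    x * b ^ k ≤ d * b ^ k - c * a ^ k * b ^ (k - 1) := by
  have hbk : b ^ k = b * b ^ (k - 1) := by rw [← pow_succ', Nat.sub_add_cancel hk]
  have hsubtracted : x * (c * a ^ k * b ^ (k - 1)) ≤ c * b ^ k := by
    rw [hbk]
    have := mul_le_mul_of_nonneg_left hab hc
    nlinarith [pow_pos hb (k - 1)]
  have hscaled : x * (x * b ^ k) ≤ x * (d * b ^ k - c * a ^ k * b ^ (k - 1)) := by
    have : x * (x * b ^ k) = (d * x - c) * b ^ k := by rw [← hroot]; ring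
    rw [this]
    linarith
  exact le_of_mul_le_mul_left hscaled hx

variable {D : ℕ → ℝ}

lemma recurrence_pos_and_mul_pow_le (hk : 1 ≤ k) (hc : 0 ≤ c) (hx : 0 < x) (hxd : x ≤ d)
    (hroot : x ^ 2 = d * x - c) (hD0 : D 0 = 1) (hD1 : D 1 = d)
    (hDrec : ∀ n, 1 ≤ n → D (n + 1) = d * D n ^ k - c * D (n - 1) ^ k * D n ^ (k - 1))
    (n : ℕ) : 0 < D n ∧ x * D n ^ k ≤ D (n + 1) := by
  induction n with
  | zero => simp [hD0, hD1, hxd]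
  | succ n ih =>
    obtain ⟨hpos, hle⟩ := ih
    have hpos' : 0 < D (n + 1) := lt_of_lt_of_le (by positivity) hle
    refine ⟨hpos', ?_⟩
    rw [hDrec (n + 1) (by omega), Nat.add_sub_cancel]
    exact mul_pow_le_recurrence_step hk hc hx hroot hpos' hle

lemma pow_geom_sum_mul_pow_le_of_mul_pow_le_succ (hx : 0 ≤ x) (hD1 : 0 ≤ D 1)
    (hstep : ∀ n, x * D n ^ k ≤ D (n + 1)) (m : ℕ) :
    x ^ (∑ l ∈ range m, k ^ l) * D 1 ^ k ^ m ≤ D (m + 1) := by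
  induction m with
  | zero => simp
  | succ m ih =>
    have hunfold : x ^ (∑ l ∈ range (m + 1), k ^ l) * D 1 ^ k ^ (m + 1)
        = x * (x ^ (∑ l ∈ range m, k ^ l) * D 1 ^ k ^ m) ^ k := by
      rw [geom_sum_succ, mul_pow, ← pow_mul, ← pow_mul, pow_succ, pow_add, pow_one]
      ring
    calc x ^ (∑ l ∈ range (m + 1), k ^ l) * D 1 ^ k ^ (m + 1)
        = x * (x ^ (∑ l ∈ range m, k ^ l) * D 1 ^ k ^ m) ^ k := hunfold
      _ ≤ x * D (m + 1) ^ k := by gcongr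
      _ ≤ D (m + 1 + 1) := hstep (m + 1)

end Recurrence

theorem stmt_8_general (k d r : ℕ) (hk : 2 ≤ k) (hd : 2 ≤ d)
    (hrk : 4 * r * k ≤ d ^ 2)
    (x : ℝ) (hx : x = ((d : ℝ) + Real.sqrt ((d : ℝ) ^ 2 - 4 * ((r : ℝ) * k))) / 2)
    (D : ℕ → ℝ) (hD0 : D 0 = 1) (hD1 : D 1 = d)
    (hDrec : ∀ n, 1 ≤ n →
      D (n + 1) = d * D n ^ k - r * k * D (n - 1) ^ k * D n ^ (k - 1)) :
    ∀ n, 1 ≤ n →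
      D n ≥ x ^ (∑ l ∈ Finset.range (n - 1), k ^ l) * (d : ℝ) ^ k ^ (n - 1) := by
  have hd0 : (0 : ℝ) < d := Nat.cast_pos.mpr (by omega)
  have hc : (0 : ℝ) ≤ r * k := by positivity
  have hdiscr : (0 : ℝ) ≤ (d : ℝ) ^ 2 - 4 * ((r : ℝ) * k) := by
    rw [sub_nonneg, ← mul_assoc]; exact_mod_cast hrk
  have hx0 : 0 < x := by rw [hx]; positivity
  have hxd : x ≤ d := hx ▸ add_sqrt_sq_sub_div_two_le hd0.le hc
  have hroot : x ^ 2 = d * x - r * k := hx ▸ add_sqrt_sq_sub_div_two_sq hdiscr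
  have hstep n := (recurrence_pos_and_mul_pow_le (by omega) hc hx0 hxd hroot hD0 hD1 hDrec n).2
  intro n hn
  obtain ⟨m, rfl⟩ : ∃ m, n = m + 1 := ⟨n - 1, by omega⟩
  simpa [hD1] using pow_geom_sum_mul_pow_le_of_mul_pow_le_succ hx0.le (hD1 ▸ hd0.le) hstep m

/-- Lower bound on the degeneracy recursion
`D (n+1) = d·D n ^ k - r·k·D (n-1) ^ k · D n ^ (k-1)` in the regime
`4·r·k ≤ d²`: `D n ≥ x₊ ^ s_{n-1} · d ^ (k ^ (n-1))`, with
`x₊ = (d + √(d² - 4·r·k))/2` and `s_{n-1} = ∑_{l=0}^{n-2} k ^ l`. -/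
theorem stmt_8 (k d r : ℕ) (hk : 2 ≤ k) (hd : 2 ≤ d) (hr : 1 ≤ r)
    (hrk : 4 * r * k ≤ d ^ 2)
    (x : ℝ) (hx : x = ((d : ℝ) + Real.sqrt ((d : ℝ) ^ 2 - 4 * ((r : ℝ) * k))) / 2)
    (D : ℕ → ℝ) (hD0 : D 0 = 1) (hD1 : D 1 = d)
    (hDrec : ∀ n, 1 ≤ n →
      D (n + 1) = d * D n ^ k - r * k * D (n - 1) ^ k * D n ^ (k - 1)) :
    ∀ n, 1 ≤ n →
      D n ≥ x ^ (∑ l ∈ Finset.range (n - 1), k ^ l) * (d : ℝ) ^ k ^ (n - 1) :=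
  stmt_8_general k d r hk hd hrk x hx D hD0 hD1 hDrec
end

section
/- Let k ≥ 2 and d ≥ 2 be integers and let r ≥ 1 be an integer with 4rk ≤ d². Define D : ℕ → ℝ by D_0 = 1, D_1 = d, and D_{n+1} = d·D_n^k − r·k·D_{n−1}^k·D_n^{k−1} for n ≥ 1. Then for all n ≥ 1, D_n ≥ d^{k^{n−1}}; in particular D_n > 0 for all n, so the dimension of the unfrustrated ground space grows at least doubly exponentially in n. -/
/-!
Factor the recursion as `D (n+1) = D n ^ (k-1) * (d * D n - r k * D (n-1) ^ k)`. The invariant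
`D n ≥ (d/2) * D (n-1) ^ k` propagates: combined with `r k ≤ d²/4` it gives
`r k * D (n-1) ^ k ≤ (d/2) * D n`, so the bracket is at least `(d/2) * D n`. Since `d ≥ 2`, the
invariant yields `D n ≥ D (n-1) ^ k`, hence `D n ≥ d ^ k ^ (n-1)`.
-/

lemma half_mul_pow_le_step {k : ℕ} {d c x y : ℝ} (hk : 1 ≤ k) (hd : 0 ≤ d) (hcd : 4 * c ≤ d ^ 2)
    (hx : 0 ≤ x) (hy : 0 ≤ y) (hxy : d / 2 * x ^ k ≤ y) :
    d / 2 * y ^ k ≤ d * y ^ k - c * x ^ k * y ^ (k - 1) := by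
  have hxk : 0 ≤ x ^ k := pow_nonneg hx k
  have hcx : c * x ^ k ≤ d / 2 * y :=
    calc c * x ^ k ≤ d ^ 2 / 4 * x ^ k := by gcongr; linarith
      _ = d / 2 * (d / 2 * x ^ k) := by ring
      _ ≤ d / 2 * y := by gcongr
  have hyk : y ^ k = y * y ^ (k - 1) := by rw [← pow_succ', Nat.sub_add_cancel hk]
  have : c * x ^ k * y ^ (k - 1) ≤ d / 2 * y * y ^ (k - 1) := by gcongr
  rw [hyk]
  linarith

section Recursion

variable {k : ℕ} {d c : ℝ} {D : ℕ → ℝ}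

lemma pos_and_half_mul_pow_le (hk : 1 ≤ k) (hd : 0 < d) (hcd : 4 * c ≤ d ^ 2)
    (hD0 : D 0 = 1) (hD1 : D 1 = d)
    (hrec : ∀ n, D (n + 2) = d * D (n + 1) ^ k - c * D n ^ k * D (n + 1) ^ (k - 1)) (n : ℕ) :
    0 < D n ∧ d / 2 * D n ^ k ≤ D (n + 1) := by
  induction n with
  | zero => simp only [hD0, hD1, one_pow]; constructor <;> linarith
  | succ n ih =>
    obtain ⟨hpos, hle⟩ := ih
    have hpos' : 0 < D (n + 1) := lt_of_lt_of_le (by positivity) hle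
    refine ⟨hpos', ?_⟩
    rw [hrec n]
    exact half_mul_pow_le_step hk hd.le hcd hpos.le hpos'.le hle

lemma pow_pow_le (hk : 1 ≤ k) (hd : 2 ≤ d) (hcd : 4 * c ≤ d ^ 2)
    (hD0 : D 0 = 1) (hD1 : D 1 = d)
    (hrec : ∀ n, D (n + 2) = d * D (n + 1) ^ k - c * D n ^ k * D (n + 1) ^ (k - 1)) (n : ℕ) :
    d ^ k ^ n ≤ D (n + 1) := by
  induction n with
  | zero => simp [hD1]
  | succ n ih =>
    obtain ⟨hpos, hle⟩ :=
      pos_and_half_mul_pow_le hk (by linarith) hcd hD0 hD1 hrec (n + 1)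
    calc d ^ k ^ (n + 1) = (d ^ k ^ n) ^ k := by rw [pow_succ, pow_mul]
      _ ≤ D (n + 1) ^ k := by gcongr
      _ ≤ d / 2 * D (n + 1) ^ k := le_mul_of_one_le_left (pow_nonneg hpos.le k) (by linarith)
      _ ≤ D (n + 2) := hle

end Recursion

theorem stmt_9_general (k d r : ℕ) (hk : 2 ≤ k) (hd : 2 ≤ d)
    (hrk : 4 * r * k ≤ d ^ 2)
    (D : ℕ → ℝ) (hD0 : D 0 = 1) (hD1 : D 1 = d)
    (hDrec : ∀ n, 1 ≤ n →
      D (n + 1) = d * D n ^ k - r * k * D (n - 1) ^ k * D n ^ (k - 1)) :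
    (∀ n, 1 ≤ n → D n ≥ (d : ℝ) ^ k ^ (n - 1)) ∧ ∀ n, D n > 0 := by
  have hk1 : 1 ≤ k := by omega
  have hd2 : (2 : ℝ) ≤ d := by exact_mod_cast hd
  have hcd : 4 * ((r : ℝ) * k) ≤ (d : ℝ) ^ 2 := by rw [← mul_assoc]; exact_mod_cast hrk
  have hrec : ∀ n, D (n + 2) = d * D (n + 1) ^ k - r * k * D n ^ k * D (n + 1) ^ (k - 1) :=
    fun n => by simpa using hDrec (n + 1) (by omega)
  refine ⟨fun n hn => ?_, fun n => ?_⟩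
  · obtain ⟨m, rfl⟩ := Nat.exists_eq_add_of_le' hn
    simpa using pow_pow_le hk1 hd2 hcd hD0 hD1 hrec m
  · exact (pos_and_half_mul_pow_le hk1 (by linarith) hcd hD0 hD1 hrec n).1

/-- In the regime `4·r·k ≤ d²` (with `k ≥ 2`, `d ≥ 2`, `r ≥ 1`) the degeneracy
recursion satisfies `D n ≥ d ^ (k ^ (n-1))` for all `n ≥ 1`; in particular
`D n > 0` for all `n`: doubly exponential growth. -/
theorem stmt_9 (k d r : ℕ) (hk : 2 ≤ k) (hd : 2 ≤ d) (hr : 1 ≤ r)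
    (hrk : 4 * r * k ≤ d ^ 2)
    (D : ℕ → ℝ) (hD0 : D 0 = 1) (hD1 : D 1 = d)
    (hDrec : ∀ n, 1 ≤ n →
      D (n + 1) = d * D n ^ k - r * k * D (n - 1) ^ k * D n ^ (k - 1)) :
    (∀ n, 1 ≤ n → D n ≥ (d : ℝ) ^ k ^ (n - 1)) ∧ ∀ n, D n > 0 :=
  stmt_9_general k d r hk hd hrk D hD0 hD1 hDrec
end

section
/- Let k ≥ 1 and d ≥ 2 be integers and let r ≥ 1 be an integer with 4rk ≤ d². Define D : ℕ → ℝ by D_0 = 1, D_1 = d, and D_{n+1} = d·D_n^k − r·k·D_{n−1}^k·D_n^{k−1} for n ≥ 1. Then for all n ≥ 1, 2·D_n ≥ d·D_{n−1}^k. -/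
/-!
Factoring out `D n ^ (k - 1)`, the recursion gives
`2 D (n+1) - d D n ^ k = D n ^ (k - 1) (d D n - 2 r k D (n-1) ^ k)`.
If `2 D n ≥ d D (n-1) ^ k`, then `d D n ≥ (d² / 2) D (n-1) ^ k ≥ 2 r k D (n-1) ^ k`
because `4 r k ≤ d²`, so the bound propagates from `n` to `n + 1`, as long as `D` stays
nonnegative, which the bound itself guarantees.
-/

lemma le_two_mul_sub_of_four_mul_le_sq {d c x y p : ℝ} (hd : 0 ≤ d) (hy : 0 ≤ y) (hp : 0 ≤ p)
    (hc : 4 * c ≤ d ^ 2) (hxy : d * y ≤ 2 * x) :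
    d * (x * p) ≤ 2 * (d * (x * p) - c * y * p) := by
  have hdx : 2 * c * y ≤ d * x := by nlinarith [mul_le_mul_of_nonneg_left hxy hd]
  nlinarith [mul_le_mul_of_nonneg_right hdx hp]

theorem stmt_10_general (k d r : ℕ) (hk : 1 ≤ k)
    (hrk : 4 * r * k ≤ d ^ 2)
    (D : ℕ → ℝ) (hD0 : D 0 = 1) (hD1 : D 1 = d)
    (hDrec : ∀ n, 1 ≤ n →
      D (n + 1) = d * D n ^ k - r * k * D (n - 1) ^ k * D n ^ (k - 1)) :
    ∀ n, 1 ≤ n → 2 * D n ≥ d * D (n - 1) ^ k := by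
  have hrk_real : 4 * ((r : ℝ) * k) ≤ (d : ℝ) ^ 2 := by exact_mod_cast (mul_assoc 4 r k) ▸ hrk
  have nonneg_and_bound : ∀ n, 1 ≤ n → 0 ≤ D (n - 1) ∧ 2 * D n ≥ d * D (n - 1) ^ k := by
    intro n hn
    induction n, hn using Nat.le_induction with
    | base =>
      rw [Nat.sub_self, hD0, hD1, one_pow, mul_one]
      exact ⟨zero_le_one, by linarith [d.cast_nonneg (α := ℝ)]⟩
    | succ n hn ih =>
      obtain ⟨hprev, hbound⟩ := ih
      have hDn : 0 ≤ D n := by nlinarith [mul_nonneg d.cast_nonneg (pow_nonneg hprev k)]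
      refine ⟨hDn, ?_⟩
      rw [Nat.add_sub_cancel, hDrec n hn, ← mul_pow_sub_one (by omega : k ≠ 0) (D n)]
      exact le_two_mul_sub_of_four_mul_le_sq d.cast_nonneg (pow_nonneg hprev k)
        (pow_nonneg hDn _) hrk_real hbound
  exact fun n hn => (nonneg_and_bound n hn).2

/-- In the regime `4·r·k ≤ d²` (with `k ≥ 1`, `d ≥ 2`, `r ≥ 1`) the degeneracy
recursion satisfies `2·D n ≥ d·D (n-1) ^ k` for all `n ≥ 1`
(equivalently `γ n ≥ d/2`). -/
theorem stmt_10 (k d r : ℕ) (hk : 1 ≤ k) (hd : 2 ≤ d) (hr : 1 ≤ r)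
    (hrk : 4 * r * k ≤ d ^ 2)
    (D : ℕ → ℝ) (hD0 : D 0 = 1) (hD1 : D 1 = d)
    (hDrec : ∀ n, 1 ≤ n →
      D (n + 1) = d * D n ^ k - r * k * D (n - 1) ^ k * D n ^ (k - 1)) :
    ∀ n, 1 ≤ n → 2 * D n ≥ d * D (n - 1) ^ k :=
  stmt_10_general k d r hk hrk D hD0 hD1 hDrec
end

section
/- Let d, k, r be positive integers with 4rk ≤ d² and x := ⌊2r/d⌋ ≥ 2. Then (⌈2r/d⌉ + 1)·(k − 1) + ⌊2r/d⌋ ≤ d − 2, where ⌈·⌉ and ⌊·⌋ denote the ceiling and floor of the rational number 2r/d. -/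
/-!
Write `x = ⌊2r/d⌋`. Then `x·d ≤ 2r`, so `2xk·d ≤ 4rk ≤ d²` and hence `2xk ≤ d`.
On the other side `⌈2r/d⌉ ≤ x + 1`, and `x ≥ 2` gives `2k ≤ xk`, so the left-hand side
is at most `(x + 2)(k - 1) + x = xk + 2k - 2 ≤ 2xk - 2 ≤ d - 2`.
-/

theorem ceil_add_one_mul_sub_one_add_floor_le {α : Type*} [Ring α] [LinearOrder α] [FloorRing α]
    (q : α) {k : ℤ} (hk : 1 ≤ k) (hq : 2 ≤ ⌊q⌋) :
    (⌈q⌉ + 1) * (k - 1) + ⌊q⌋ ≤ 2 * ⌊q⌋ * k - 2 := by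
  have hceil : ⌈q⌉ + 1 ≤ ⌊q⌋ + 2 := by linarith [Int.ceil_le_floor_add_one q]
  calc (⌈q⌉ + 1) * (k - 1) + ⌊q⌋ ≤ (⌊q⌋ + 2) * (k - 1) + ⌊q⌋ := by gcongr
    _ = ⌊q⌋ * k + 2 * k - 2 := by ring
    _ ≤ 2 * ⌊q⌋ * k - 2 := by
      linarith [mul_le_mul_of_nonneg_right hq (by omega : (0 : ℤ) ≤ k)]

section FloorRing

variable {α : Type*} [Field α] [LinearOrder α] [IsStrictOrderedRing α] [FloorRing α]

theorem Int.floor_div_mul_le (a : α) {d : α} (hd : 0 < d) : (⌊a / d⌋ : α) * d ≤ a :=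
  (le_div_iff₀ hd).mp (Int.floor_le _)

theorem two_mul_floor_mul_le_of_four_mul_le_sq {d k r : ℕ} (hd : 0 < d)
    (hrk : 4 * r * k ≤ d ^ 2) : 2 * ⌊2 * (r : α) / d⌋ * k ≤ d := by
  have hdα : (0 : α) < d := by exact_mod_cast hd
  have hfloor := Int.floor_div_mul_le (2 * (r : α)) hdα
  have hrkα : 4 * (r : α) * k ≤ (d : α) ^ 2 := by exact_mod_cast hrk
  suffices (2 * ⌊2 * (r : α) / d⌋ * k : α) * d ≤ (d : α) * d by
    exact_mod_cast le_of_mul_le_mul_right this hdα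
  calc (2 * ⌊2 * (r : α) / d⌋ * k : α) * d
        = 2 * k * ((⌊2 * (r : α) / d⌋ : α) * d) := by ring
    _ ≤ 2 * k * (2 * r) := by gcongr
    _ ≤ d * d := by linear_combination hrkα

end FloorRing

theorem stmt_12_general (d k r : ℕ) (hd : 0 < d) (hk : 0 < k)
    (hrk : 4 * r * k ≤ d ^ 2) (hx : 2 ≤ ⌊(2 * (r : ℚ) / d)⌋) :
    (⌈(2 * (r : ℚ) / d)⌉ + 1) * ((k : ℤ) - 1) + ⌊(2 * (r : ℚ) / d)⌋
      ≤ (d : ℤ) - 2 := by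
  have hkZ : (1 : ℤ) ≤ k := by exact_mod_cast hk
  linarith [ceil_add_one_mul_sub_one_add_floor_le (2 * (r : ℚ) / d) hkZ hx,
    two_mul_floor_mul_le_of_four_mul_le_sq (α := ℚ) hd hrk]

/-- The case `x = ⌊2r/d⌋ ≥ 2` of the appendix inequality: for positive
integers `d, k, r` with `4·r·k ≤ d²`,
`(⌈2r/d⌉ + 1)·(k - 1) + ⌊2r/d⌋ ≤ d - 2`. -/
theorem stmt_12 (d k r : ℕ) (hd : 0 < d) (hk : 0 < k) (hr : 0 < r)
    (hrk : 4 * r * k ≤ d ^ 2) (hx : 2 ≤ ⌊(2 * (r : ℚ) / d)⌋) :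
    (⌈(2 * (r : ℚ) / d)⌉ + 1) * ((k : ℤ) - 1) + ⌊(2 * (r : ℚ) / d)⌋
      ≤ (d : ℤ) - 2 :=
  stmt_12_general d k r hd hk hrk hx
end
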